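/- Let f : [0,∞) → ℝ be a C² function that is nonincreasing (f' ≤ 0), bounded below, and satisfies f''(t) ≥ C·f'(t) for all t ≥ 0, where C > 0 is a constant. Then f'(t) → 0 as t → ∞. -/

import Mathlib

/-!
Since `f'' ≥ C f'`, the function `e^{-Cu} f'(u)` is nondecreasing, so `f'(u) ≤ e^{C(u-t)} f'(t)`
for `u ≤ t`. Integrating over `[t-1, t]` gives `f(t) - f(t-1) ≤ (1 - e^{-C})/C · f'(t) ≤ 0`. As `f`
is nonincreasing and bounded below it converges, so the left side tends to `0`, and so does `f'(t)`.
-/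

open Set Filter Topology Real

section Monotonicity

variable {D : Set ℝ} {f f' : ℝ → ℝ}

theorem monotoneOn_of_hasDerivAt_nonneg (hD : Convex ℝ D) (hf : ∀ x ∈ D, HasDerivAt f (f' x) x)
    (hf' : ∀ x ∈ D, 0 ≤ f' x) : MonotoneOn f D :=
  monotoneOn_of_hasDerivWithinAt_nonneg hD (fun x hx ↦ (hf x hx).continuousAt.continuousWithinAt)
    (fun x hx ↦ (hf x (interior_subset hx)).hasDerivWithinAt) fun x hx ↦ hf' x (interior_subset hx)

theorem antitoneOn_of_hasDerivAt_nonpos (hD : Convex ℝ D) (hf : ∀ x ∈ D, HasDerivAt f (f' x) x)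
    (hf' : ∀ x ∈ D, f' x ≤ 0) : AntitoneOn f D :=
  antitoneOn_of_hasDerivWithinAt_nonpos hD (fun x hx ↦ (hf x hx).continuousAt.continuousWithinAt)
    (fun x hx ↦ (hf x (interior_subset hx)).hasDerivWithinAt) fun x hx ↦ hf' x (interior_subset hx)

end Monotonicity

theorem AntitoneOn.exists_tendsto_atTop_of_bddBelow {f : ℝ → ℝ} {a : ℝ}
    (hf : AntitoneOn f (Ici a)) (hb : BddBelow (f '' Ici a)) : ∃ L, Tendsto f atTop (𝓝 L) := by
  have hF : Antitone fun t ↦ f (max t a) := fun s t hst ↦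
    hf (le_max_right s a) (le_max_right t a) (max_le_max_right a hst)
  have hFb : BddBelow (range fun t ↦ f (max t a)) :=
    hb.mono <| range_subset_iff.2 fun t ↦ mem_image_of_mem f (le_max_right t a)
  refine ⟨_, (tendsto_atTop_ciInf hF hFb).congr' ?_⟩
  filter_upwards [eventually_ge_atTop a] with t ht
  rw [max_eq_left ht]

section Comparison

variable {f f' f'' : ℝ → ℝ} {C : ℝ} {s : Set ℝ}

theorem monotoneOn_exp_neg_mul_mul_of_mul_le_deriv (hs : Convex ℝ s)
    (hd : ∀ x ∈ s, HasDerivAt f' (f'' x) x) (hineq : ∀ x ∈ s, C * f' x ≤ f'' x) :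
    MonotoneOn (fun x ↦ exp (-(C * x)) * f' x) s := by
  refine monotoneOn_of_hasDerivAt_nonneg hs (f' := fun x ↦ exp (-(C * x)) * (f'' x - C * f' x))
    (fun x hx ↦ ?_) fun x hx ↦ mul_nonneg (exp_pos _).le (sub_nonneg.2 (hineq x hx))
  have hexp : HasDerivAt (fun x ↦ exp (-(C * x))) (exp (-(C * x)) * -C) x :=
    (((hasDerivAt_id x).const_mul C).neg.congr_deriv (by simp)).exp
  exact (hexp.mul (hd x hx)).congr_deriv (by ring)

theorem le_exp_mul_sub_mul_of_mul_le_deriv (hs : Convex ℝ s)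
    (hd : ∀ x ∈ s, HasDerivAt f' (f'' x) x) (hineq : ∀ x ∈ s, C * f' x ≤ f'' x)
    {u t : ℝ} (hu : u ∈ s) (ht : t ∈ s) (hut : u ≤ t) : f' u ≤ exp (C * (u - t)) * f' t := by
  have hmono := monotoneOn_exp_neg_mul_mul_of_mul_le_deriv hs hd hineq hu ht hut
  calc f' u = exp (C * u) * (exp (-(C * u)) * f' u) := by
        rw [← mul_assoc, ← exp_add, add_neg_cancel, exp_zero, one_mul]
    _ ≤ exp (C * u) * (exp (-(C * t)) * f' t) := by gcongr
    _ = exp (C * (u - t)) * f' t := by rw [← mul_assoc, ← exp_add]; ring_nf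

end Comparison

theorem sub_le_of_deriv_le_exp_mul {f f' : ℝ → ℝ} {C t h : ℝ} (hC : C ≠ 0) (hh : 0 ≤ h)
    (hd : ∀ u ∈ Icc (t - h) t, HasDerivAt f (f' u) u)
    (hle : ∀ u ∈ Icc (t - h) t, f' u ≤ exp (C * (u - t)) * f' t) :
    f t - f (t - h) ≤ (1 - exp (-(C * h))) / C * f' t := by
  -- `f' t / C * exp (C * (u - t))` is a primitive of the comparison function
  have hanti : AntitoneOn (fun u ↦ f u - f' t / C * exp (C * (u - t))) (Icc (t - h) t) := by
    refine antitoneOn_of_hasDerivAt_nonpos (convex_Icc _ _)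
      (f' := fun u ↦ f' u - f' t * exp (C * (u - t))) (fun u hu ↦ ?_)
      fun u hu ↦ by linarith [hle u hu]
    have hexp : HasDerivAt (fun u ↦ exp (C * (u - t))) (exp (C * (u - t)) * C) u :=
      (((hasDerivAt_id u).sub_const t).const_mul C |>.congr_deriv (by simp)).exp
    refine ((hd u hu).sub (hexp.const_mul _)).congr_deriv ?_
    field_simp
  have hends := hanti (left_mem_Icc.2 (by linarith)) (right_mem_Icc.2 (by linarith))
    (by linarith)
  simp only [sub_self, mul_zero, exp_zero, mul_one, sub_sub_cancel_left, mul_neg] at hends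
  have hrhs : (1 - exp (-(C * h))) / C * f' t = f' t / C - f' t / C * exp (-(C * h)) := by ring
  linarith

theorem phong_sturm_convergence_general (f f' f'' : ℝ → ℝ) (C : ℝ) (hC : 0 < C)
    (hd : ∀ t, 0 ≤ t → HasDerivAt f (f' t) t)
    (hd' : ∀ t, 0 ≤ t → HasDerivAt f' (f'' t) t)
    (hmono : ∀ t, 0 ≤ t → f' t ≤ 0)
    (hbdd : ∃ m, ∀ t, 0 ≤ t → m ≤ f t)
    (hineq : ∀ t, 0 ≤ t → C * f' t ≤ f'' t) :
    Filter.Tendsto f' Filter.atTop (nhds 0) := by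
  obtain ⟨m, hm⟩ := hbdd
  obtain ⟨L, hL⟩ : ∃ L, Tendsto f atTop (𝓝 L) :=
    (antitoneOn_of_hasDerivAt_nonpos (convex_Ici 0) hd hmono).exists_tendsto_atTop_of_bddBelow
      ⟨m, forall_mem_image.2 hm⟩
  have hstep : Tendsto (fun t ↦ f t - f (t - 1)) atTop (𝓝 0) := by
    simpa [sub_eq_add_neg] using
      hL.sub (hL.comp (tendsto_atTop_add_const_right _ (-1) tendsto_id))
  set c := (1 - exp (-(C * 1))) / C
  have hc : 0 < c := div_pos (sub_pos.2 (exp_lt_one_iff.2 (by linarith))) hC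
  have hlower : ∀ t, 1 ≤ t → (f t - f (t - 1)) / c ≤ f' t := fun t ht ↦
    (div_le_iff₀' hc).2 <| sub_le_of_deriv_le_exp_mul hC.ne' zero_le_one
      (fun u hu ↦ hd u (by linarith [hu.1]))
      (fun u hu ↦ le_exp_mul_sub_mul_of_mul_le_deriv (convex_Ici 0) hd' hineq
        (mem_Ici.2 (by linarith [hu.1])) (mem_Ici.2 (by linarith)) hu.2)
  refine tendsto_of_tendsto_of_tendsto_of_le_of_le' (by simpa using hstep.div_const c)
    tendsto_const_nhds ?_ ?_
  · filter_upwards [eventually_ge_atTop 1] with t ht using hlower t ht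
  · filter_upwards [eventually_ge_atTop 0] with t ht using hmono t ht

theorem phong_sturm_convergence (f f' f'' : ℝ → ℝ) (C : ℝ) (hC : 0 < C)
    (hd : ∀ t, 0 ≤ t → HasDerivAt f (f' t) t)
    (hd' : ∀ t, 0 ≤ t → HasDerivAt f' (f'' t) t)
    (hcont : ContinuousOn f'' (Set.Ici 0))
    (hmono : ∀ t, 0 ≤ t → f' t ≤ 0)
    (hbdd : ∃ m, ∀ t, 0 ≤ t → m ≤ f t)
    (hineq : ∀ t, 0 ≤ t → C * f' t ≤ f'' t) :
    Filter.Tendsto f' Filter.atTop (nhds 0) :=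
  phong_sturm_convergence_general f f' f'' C hC hd hd' hmono hbdd hineq
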